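/- Let c ∈ ℚ[[x]] be the Catalan generating function and set f = -x·c³. Then f∘f = x and c²·(c²∘f) = 1; that is, the Riordan array (c(x)², -x·c(x)³) is a Riordan involution. -/

import Mathlib

open PowerSeries Finset

/-- Substitution `f ∘ h` of a power series `h` (intended to have zero constant
term) into a power series `f`: the coefficient of `xⁿ` is
`∑_{k=0}^{n} f_k · [xⁿ](hᵏ)`. -/
noncomputable def PowerSeries.comp {R : Type*} [CommSemiring R]
    (f h : PowerSeries R) : PowerSeries R :=
  PowerSeries.mk fun n => ∑ k ∈ Finset.range (n + 1),
    (PowerSeries.coeff k f) * (PowerSeries.coeff n (h ^ k))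

/-! Once `comp` is identified with Mathlib's `PowerSeries.subst`, substitution of a series
without constant term is a ring homomorphism. Since `f = -x c³ = c - c²`, the series `d = c ∘ f`
satisfies `d = 1 + (c - c²) d²`; for `u = c d` this reads `(u - 1)(1 + (c - 1)(u + 1)) = 0`,
whose second factor is a unit, so `c d = 1`. Then `f ∘ f = d - d² = (c - 1) / c² = x` and
`c² (c² ∘ f) = (c d)² = 1`. -/

namespace PowerSeries

variable {R : Type*} [CommRing R]

lemma coeff_pow_eq_zero_of_lt {h : R⟦X⟧} (hh : constantCoeff h = 0) {n k : ℕ} (hnk : n < k) :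
    coeff n (h ^ k) = 0 :=
  X_pow_dvd_iff.mp (pow_dvd_pow_of_dvd (X_dvd_iff.mpr hh) k) n hnk

theorem comp_eq_subst (f : R⟦X⟧) {h : R⟦X⟧} (hh : constantCoeff h = 0) :
    f.comp h = f.subst h := by
  ext n
  rw [coeff_subst' (HasSubst.of_constantCoeff_zero' hh), PowerSeries.comp, coeff_mk,
    finsum_eq_sum_of_support_subset]
  · rfl
  · intro d hd
    rw [Finset.coe_range, Set.mem_Iio, Nat.lt_succ_iff]
    by_contra! hnd
    exact hd (by simp only [smul_eq_mul, coeff_pow_eq_zero_of_lt hh hnd, mul_zero])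

end PowerSeries

section CatalanEquation

variable {R : Type*} [CommRing R] {c : R⟦X⟧}

lemma constantCoeff_eq_one_of_eq_one_add_X_mul_sq (hc : c = 1 + X * c ^ 2) :
    constantCoeff c = 1 := by
  rw [hc]
  simp

lemma neg_X_mul_pow_three_eq_sub_sq (hc : c = 1 + X * c ^ 2) : -(X * c ^ 3) = c - c ^ 2 := by
  linear_combination c * hc

lemma constantCoeff_sub_sq_eq_zero (hc : c = 1 + X * c ^ 2) : constantCoeff (c - c ^ 2) = 0 := by
  simp [constantCoeff_eq_one_of_eq_one_add_X_mul_sq hc]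

lemma subst_eq_one_add_mul_sq (hc : c = 1 + X * c ^ 2) {f : R⟦X⟧} (hf : HasSubst f) :
    (c.subst f : R⟦X⟧) = 1 + f * c.subst f ^ 2 := by
  conv_lhs => rw [hc]
  rw [subst_add hf, subst_mul hf, subst_pow hf, subst_X hf, ← coe_substAlgHom hf, map_one]

lemma mul_subst_sub_sq_eq_one (hc : c = 1 + X * c ^ 2) :
    c * c.subst (c - c ^ 2) = 1 := by
  have hf := HasSubst.of_constantCoeff_zero' (constantCoeff_sub_sq_eq_zero hc)
  have hd := subst_eq_one_add_mul_sq hc hf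
  set d : R⟦X⟧ := c.subst (c - c ^ 2)
  have hprod : (c * d - 1) * (1 + (c - 1) * (c * d + 1)) = 0 := by
    linear_combination c * hd
  have hunit : IsUnit (1 + (c - 1) * (c * d + 1)) := by
    rw [isUnit_iff_constantCoeff]
    simp [constantCoeff_eq_one_of_eq_one_add_X_mul_sq hc]
  exact sub_eq_zero.mp (hunit.mul_left_eq_zero.mp hprod)

end CatalanEquation

theorem stmt4_general (c : PowerSeries ℚ)
    (hc : c = 1 + PowerSeries.X * c ^ 2) :
    PowerSeries.comp (-(PowerSeries.X * c ^ 3)) (-(PowerSeries.X * c ^ 3)) = PowerSeries.X ∧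
      c ^ 2 * PowerSeries.comp (c ^ 2) (-(PowerSeries.X * c ^ 3)) = 1 := by
  have hf := HasSubst.of_constantCoeff_zero' (constantCoeff_sub_sq_eq_zero hc)
  have hcd := mul_subst_sub_sq_eq_one hc
  rw [neg_X_mul_pow_three_eq_sub_sq hc, comp_eq_subst _ (constantCoeff_sub_sq_eq_zero hc),
    comp_eq_subst _ (constantCoeff_sub_sq_eq_zero hc), subst_sub hf, subst_pow hf]
  set d : ℚ⟦X⟧ := c.subst (c - c ^ 2)
  constructor
  · linear_combination d ^ 2 * hc + (X * (c * d + 1) - d) * hcd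
  · linear_combination (c * d + 1) * hcd

/-- The Riordan array `(c(x)², -x·c(x)³)` is a Riordan involution, where `c` is
the Catalan generating function. -/
theorem stmt4 (c : PowerSeries ℚ) (hc0 : PowerSeries.constantCoeff c = 1)
    (hc : c = 1 + PowerSeries.X * c ^ 2) :
    PowerSeries.comp (-(PowerSeries.X * c ^ 3)) (-(PowerSeries.X * c ^ 3)) = PowerSeries.X ∧
      c ^ 2 * PowerSeries.comp (c ^ 2) (-(PowerSeries.X * c ^ 3)) = 1 :=
  stmt4_general c hc
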